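/- For any complex numbers α, α†, β, β†, the map d: tsns → tsns ⊗ tsns defined by d(L_n)=αnM_0⊗M_n+α†nM_n⊗M_0, d(G_s)=αsM_0⊗M_s+α†sM_s⊗M_0, d(Y_p)=βM_0⊗Y_p+β†Y_p⊗M_0, d(M_p)=2(βM_0⊗M_p+β†M_p⊗M_0) is a derivation from tsns to the tsns-module tsns⊗tsns under the adjoint diagonal action. -/

import Mathlib

open Finsupp

/-- Basis indices of the twisted `N = 1` Schrödinger–Neveu–Schwarz algebra.
`L n` is `L_n` (`n ∈ ℤ`), `G k` is `G_{k+1/2}` (`k ∈ ℤ`),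
`Y k` is `Y_{k/2}` and `M k` is `M_{k/2}` (`k ∈ ℤ`, so `k/2` ranges over `(1/2)ℤ`). -/
inductive TIdx : Type
  | L : ℤ → TIdx
  | G : ℤ → TIdx
  | Y : ℤ → TIdx
  | M : ℤ → TIdx
  deriving DecidableEq

noncomputable section

/-- The underlying vector space of `tsns`: the free `ℂ`-vector space on the basis. -/
abbrev Tsns : Type := TIdx →₀ ℂ

/-- The basis vectors. -/
def bs (i : TIdx) : Tsns := Finsupp.single i 1

/-- The `ℤ₂`-parity of a basis vector. -/
def parity : TIdx → ZMod 2
  | .L _ => 0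
  | .G _ => 1
  | .Y k => (k : ZMod 2)
  | .M k => (k : ZMod 2)

/-- The sign `(-1)^{ab}` for parities `a, b`. -/
def sg (a b : ZMod 2) : ℂ := if a = 1 ∧ b = 1 then -1 else 1

/-- The super-bracket of `tsns` on basis vectors. -/
def brIdx : TIdx → TIdx → Tsns
  | .L n, .L m => ((m : ℂ) - n) • bs (.L (n + m))
  | .L n, .G k => ((k : ℂ) + 1/2 - n/2) • bs (.G (k + n))
  | .G k, .L n => (-((k : ℂ) + 1/2 - n/2)) • bs (.G (k + n))
  | .L n, .Y k => (if (k : ZMod 2) = 0 then ((k : ℂ) - n)/2 else (k : ℂ)/2) • bs (.Y (k + 2*n))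
  | .Y k, .L n => (-(if (k : ZMod 2) = 0 then ((k : ℂ) - n)/2 else (k : ℂ)/2)) • bs (.Y (k + 2*n))
  | .L n, .M k => (if (k : ZMod 2) = 0 then (k : ℂ)/2 else ((k : ℂ) + n)/2) • bs (.M (k + 2*n))
  | .M k, .L n => (-(if (k : ZMod 2) = 0 then (k : ℂ)/2 else ((k : ℂ) + n)/2)) • bs (.M (k + 2*n))
  | .G k, .G l => (2 : ℂ) • bs (.L (k + l + 1))
  | .G l, .Y k => (if (k : ZMod 2) = 0 then ((k : ℂ) - 2*l - 1)/4 else 2) • bs (.Y (k + 2*l + 1))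
  | .Y k, .G l => (if (k : ZMod 2) = 0 then -(((k : ℂ) - 2*l - 1)/4) else 2) • bs (.Y (k + 2*l + 1))
  | .G l, .M k => (if (k : ZMod 2) = 0 then (k : ℂ)/4 else 2) • bs (.M (k + 2*l + 1))
  | .M k, .G l => (if (k : ZMod 2) = 0 then -((k : ℂ)/4) else 2) • bs (.M (k + 2*l + 1))
  | .Y k, .Y l =>
      (if (k : ZMod 2) = 0 then (if (l : ZMod 2) = 0 then ((l : ℂ) - k)/4 else (l : ℂ)/4)
       else (if (l : ZMod 2) = 0 then -((k : ℂ)/4) else 2)) • bs (.M (k + l))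
  | _, _ => 0

/-- The super-bracket of `tsns`, as a bilinear map. -/
def brk : Tsns →ₗ[ℂ] Tsns →ₗ[ℂ] Tsns :=
  Finsupp.lsum ℂ fun i => LinearMap.toSpanSingleton ℂ _
    (Finsupp.lsum ℂ fun j => LinearMap.toSpanSingleton ℂ Tsns (brIdx i j))

/-- `x` is homogeneous of parity `σ`. -/
def IsHom (σ : ZMod 2) (x : Tsns) : Prop := ∀ i ∈ x.support, parity i = σ

/-- The tensor square `tsns ⊗ tsns`, modelled as the free vector space on pairs
of basis indices. -/
abbrev T2 : Type := (TIdx × TIdx) →₀ ℂ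

/-- The tensor cube `tsns ⊗ tsns ⊗ tsns`. -/
abbrev T3 : Type := (TIdx × TIdx × TIdx) →₀ ℂ

/-- The tensor product map `tsns × tsns → tsns ⊗ tsns`. -/
def tp : Tsns →ₗ[ℂ] Tsns →ₗ[ℂ] T2 :=
  Finsupp.lsum ℂ fun i => LinearMap.toSpanSingleton ℂ _
    (Finsupp.lsum ℂ fun j => LinearMap.toSpanSingleton ℂ T2 (Finsupp.single (i, j) 1))

/-- The tensor product map `tsns × tsns × tsns → tsns ⊗ tsns ⊗ tsns`. -/
def t3 : Tsns →ₗ[ℂ] Tsns →ₗ[ℂ] Tsns →ₗ[ℂ] T3 :=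
  Finsupp.lsum ℂ fun i => LinearMap.toSpanSingleton ℂ _
    (Finsupp.lsum ℂ fun j => LinearMap.toSpanSingleton ℂ _
      (Finsupp.lsum ℂ fun k => LinearMap.toSpanSingleton ℂ T3 (Finsupp.single (i, j, k) 1)))

/-- The adjoint diagonal action of `tsns` on `tsns ⊗ tsns`:
`x ∗ (a ⊗ b) = [x,a] ⊗ b + (-1)^{[x][a]} a ⊗ [x,b]`. -/
def star2 : Tsns →ₗ[ℂ] T2 →ₗ[ℂ] T2 :=
  Finsupp.lsum ℂ fun i => LinearMap.toSpanSingleton ℂ _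
    (Finsupp.lsum ℂ fun p => LinearMap.toSpanSingleton ℂ T2
      (tp (brIdx i p.1) (bs p.2) + sg (parity i) (parity p.1) • tp (bs p.1) (brIdx i p.2)))

/-- The adjoint diagonal action of `tsns` on `tsns ⊗ tsns ⊗ tsns`. -/
def star3 : Tsns →ₗ[ℂ] T3 →ₗ[ℂ] T3 :=
  Finsupp.lsum ℂ fun i => LinearMap.toSpanSingleton ℂ _
    (Finsupp.lsum ℂ fun t => LinearMap.toSpanSingleton ℂ T3
      (t3 (brIdx i t.1) (bs t.2.1) (bs t.2.2)
        + sg (parity i) (parity t.1) • t3 (bs t.1) (brIdx i t.2.1) (bs t.2.2)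
        + (sg (parity i) (parity t.1) * sg (parity i) (parity t.2.1)) •
            t3 (bs t.1) (bs t.2.1) (brIdx i t.2.2)))

/-- The super-twist map `τ(x ⊗ y) = (-1)^{[x][y]} y ⊗ x`. -/
def tau : T2 →ₗ[ℂ] T2 :=
  Finsupp.lsum ℂ fun p => LinearMap.toSpanSingleton ℂ T2
    (sg (parity p.1) (parity p.2) • Finsupp.single (p.2, p.1) 1)

/-- The super-cyclic map `ξ(x₁ ⊗ x₂ ⊗ x₃) = (-1)^{[x₁]([x₂]+[x₃])} x₂ ⊗ x₃ ⊗ x₁`. -/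
def xi : T3 →ₗ[ℂ] T3 :=
  Finsupp.lsum ℂ fun t => LinearMap.toSpanSingleton ℂ T3
    (sg (parity t.1) (parity t.2.1 + parity t.2.2) • Finsupp.single (t.2.1, t.2.2, t.1) 1)

/-- `Im(1⊗1 - τ) ⊆ tsns ⊗ tsns`. -/
def ImSkew : Submodule ℂ T2 := LinearMap.range (LinearMap.id - tau)

/-- `ℂ M₀ ⊗ M₀`, the tensor square of the center. -/
def CC : Submodule ℂ T2 := Submodule.span ℂ {Finsupp.single (TIdx.M 0, TIdx.M 0) 1}

/-- The `(1/2)ℤ`-degree of a basis vector, recorded in half-units (i.e. twice the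
degree, an integer). -/
def hdeg : TIdx → ℤ
  | .L n => 2*n
  | .G k => 2*k + 1
  | .Y k => k
  | .M k => k

/-- The degree (in half-units) of a basis vector of the tensor square. -/
def hdeg2 (p : TIdx × TIdx) : ℤ := hdeg p.1 + hdeg p.2

/-- `d : tsns → tsns ⊗ tsns` is a homogeneous derivation of `ℤ₂`-parity `π`:
`d [x,y] = (-1)^{[d][x]} x ∗ d y - (-1)^{[y]([d]+[x])} y ∗ d x`
(stated on homogeneous basis vectors). -/
def IsDerP (π : ZMod 2) (d : Tsns →ₗ[ℂ] T2) : Prop :=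
  ∀ i j : TIdx, d (brk (bs i) (bs j)) =
    sg π (parity i) • star2 (bs i) (d (bs j))
      - sg (parity j) (π + parity i) • star2 (bs j) (d (bs i))

/-- An even derivation `tsns → tsns ⊗ tsns`. -/
def IsDer2 (d : Tsns →ₗ[ℂ] T2) : Prop := IsDerP 0 d

/-- The special derivations `d^♮` on basis vectors (parameters `α, α†, β, β†`). -/
def dnatB (a a' b b' : ℂ) : TIdx → T2
  | .L n => (a * n) • Finsupp.single (.M 0, .M (2*n)) 1
      + (a' * n) • Finsupp.single (.M (2*n), .M 0) 1
  | .G k => (a * ((k : ℂ) + 1/2)) • Finsupp.single (.M 0, .M (2*k+1)) 1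
      + (a' * ((k : ℂ) + 1/2)) • Finsupp.single (.M (2*k+1), .M 0) 1
  | .Y k => b • Finsupp.single (.M 0, .Y k) 1 + b' • Finsupp.single (.Y k, .M 0) 1
  | .M k => (2*b) • Finsupp.single (.M 0, .M k) 1 + (2*b') • Finsupp.single (.M k, .M 0) 1

/-- The special derivations `d^♮ : tsns → tsns ⊗ tsns`. -/
def dnat (a a' b b' : ℂ) : Tsns →ₗ[ℂ] T2 :=
  Finsupp.lsum ℂ fun i => LinearMap.toSpanSingleton ℂ T2 (dnatB a a' b b' i)

/-- Multiplication by `(-1)^{σ·[u]}` on `tsns ⊗ tsns`. -/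
def twT2 (σ : ZMod 2) : T2 →ₗ[ℂ] T2 :=
  Finsupp.lsum ℂ fun p => LinearMap.toSpanSingleton ℂ T2
    (sg σ (parity p.1 + parity p.2) • Finsupp.single p 1)

/-- The coboundary `Δ_r (x) = (-1)^{[r][x]} x ∗ r`. -/
def Δr (r : T2) : Tsns →ₗ[ℂ] T2 :=
  Finsupp.lsum ℂ fun i => LinearMap.toSpanSingleton ℂ T2 (star2 (bs i) (twT2 (parity i) r))

/-- The embedding `tsns ⊗ (tsns ⊗ tsns) → tsns ⊗ tsns ⊗ tsns`. -/
def t13 : Tsns →ₗ[ℂ] T2 →ₗ[ℂ] T3 :=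
  Finsupp.lsum ℂ fun i => LinearMap.toSpanSingleton ℂ _
    (Finsupp.lsum ℂ fun q => LinearMap.toSpanSingleton ℂ T3 (Finsupp.single (i, q.1, q.2) 1))

/-- `1 ⊗ D : tsns ⊗ tsns → tsns ⊗ tsns ⊗ tsns` for an (even) linear map `D`. -/
def oneTensor (D : Tsns →ₗ[ℂ] T2) : T2 →ₗ[ℂ] T3 :=
  Finsupp.lsum ℂ fun p => LinearMap.toSpanSingleton ℂ T3 (t13 (bs p.1) (D (bs p.2)))

/-- The summand of `c(r)` coming from a pair of basis tensors
`p = a_i ⊗ b_i`, `q = a_j ⊗ b_j`. -/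
def cB (p q : TIdx × TIdx) : T3 :=
  sg (parity q.1) (parity p.2) • t3 (brIdx p.1 q.1) (bs p.2) (bs q.2)
    + t3 (bs p.1) (brIdx p.2 q.1) (bs q.2)
    + sg (parity q.1) (parity p.2) • t3 (bs p.1) (bs q.1) (brIdx p.2 q.2)

/-- `c` as a bilinear map. -/
def cY : T2 →ₗ[ℂ] T2 →ₗ[ℂ] T3 :=
  Finsupp.lsum ℂ fun p => LinearMap.toSpanSingleton ℂ _
    (Finsupp.lsum ℂ fun q => LinearMap.toSpanSingleton ℂ T3 (cB p q))

/-- `c(r) = [r¹²,r¹³] + [r¹²,r²³] + [r¹³,r²³]`. -/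
def cr (r : T2) : T3 := cY r r

/-- `(tsns, [·,·], D)` is a Lie superbialgebra: `Im D ⊆ Im(1⊗1−τ)`, the super
co-Jacobi identity holds, and `D` is a 1-cocycle. -/
def IsSuperBialg (D : Tsns →ₗ[ℂ] T2) : Prop :=
  (∀ x : Tsns, D x ∈ ImSkew) ∧
  (∀ x : Tsns,
    oneTensor D (D x) + xi (oneTensor D (D x)) + xi (xi (oneTensor D (D x))) = 0) ∧
  (∀ i j : TIdx, D (brk (bs i) (bs j)) =
    star2 (bs i) (D (bs j)) - sg (parity i) (parity j) • star2 (bs j) (D (bs i)))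

end

/-!
Since `M₀` is central, `x ∗ (M₀ ⊗ v) = M₀ ⊗ [x, v]` and `x ∗ (v ⊗ M₀) = [x, v] ⊗ M₀`, so
`d = M₀ ⊗ φ(·) + ψ(·) ⊗ M₀` is a derivation once `φ` and `ψ` are even derivations of `tsns` into
itself. Here `φ = α D + β E` and `ψ = α† D + β† E`, where `D = lgToM` sends `L_n ↦ n M_n`,
`G_s ↦ s M_s` and kills `Y, M` (checked on pairs of basis vectors), and `E = diagOp yWeight` has
eigenvalue `1` on `Y`, `2` on `M` and `0` on `L, G`: these weights add under the bracket, so `E`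
is a derivation by super skew-symmetry.
-/

noncomputable section

@[simp] lemma brk_bs (i j : TIdx) : brk (bs i) (bs j) = brIdx i j := by
  simp [brk, bs, LinearMap.toSpanSingleton_apply]

@[simp] lemma tp_bs_bs (i j : TIdx) : tp (bs i) (bs j) = Finsupp.single (i, j) 1 := by
  simp [tp, bs, LinearMap.toSpanSingleton_apply]

@[simp] lemma star2_bs_single (i : TIdx) (p : TIdx × TIdx) (c : ℂ) :
    star2 (bs i) (Finsupp.single p c) =
      c • (tp (brIdx i p.1) (bs p.2)
        + sg (parity i) (parity p.1) • tp (bs p.1) (brIdx i p.2)) := by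
  simp [star2, bs, LinearMap.toSpanSingleton_apply]

@[simp] lemma sg_zero_left (x : ZMod 2) : sg 0 x = 1 := by simp [sg]
@[simp] lemma sg_zero_right (x : ZMod 2) : sg x 0 = 1 := by simp [sg]
@[simp] lemma sg_one_one : sg 1 1 = -1 := by simp [sg]

lemma sg_comm (x y : ZMod 2) : sg x y = sg y x := by
  simp only [sg, and_comm]

lemma sg_mul_self (x y : ZMod 2) : sg x y * sg x y = 1 := by
  unfold sg; split_ifs <;> norm_num

@[simp] lemma brIdx_M_zero_right (i : TIdx) : brIdx i (.M 0) = 0 := by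
  cases i <;> simp [brIdx]

lemma star2_tp_M_zero_left (i : TIdx) (v : Tsns) :
    star2 (bs i) (tp (bs (.M 0)) v) = tp (bs (.M 0)) (brk (bs i) v) := by
  induction v using Finsupp.induction_linear with
  | zero => simp
  | add v w hv hw => simp only [map_add, hv, hw]
  | single j c =>
    rw [← mul_one c, ← smul_eq_mul, ← Finsupp.smul_single, ← bs]
    simp [parity]

lemma star2_tp_M_zero_right (i : TIdx) (v : Tsns) :
    star2 (bs i) (tp v (bs (.M 0))) = tp (brk (bs i) v) (bs (.M 0)) := by
  induction v using Finsupp.induction_linear with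
  | zero => simp
  | add v w hv hw => simp only [map_add, LinearMap.add_apply, hv, hw]
  | single j c =>
    rw [← mul_one c, ← smul_eq_mul, ← Finsupp.smul_single, ← bs]
    simp

lemma zmod_two_cases : ∀ x : ZMod 2, x = 0 ∨ x = 1 := by
  decide

lemma brIdx_swap (i j : TIdx) : brIdx j i = -(sg (parity i) (parity j) • brIdx i j) := by
  obtain (n|n|n|n) := i <;> obtain (m|m|m|m) := j <;>
  rcases zmod_two_cases (n : ZMod 2) with hn | hn <;>
  rcases zmod_two_cases (m : ZMod 2) with hm | hm <;>
  simp [brIdx, parity, hn, hm, sg] <;>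
  ring_nf <;> module

def IsEvenSelfDer (φ : Tsns →ₗ[ℂ] Tsns) : Prop :=
  ∀ i j : TIdx, φ (brk (bs i) (bs j)) =
    brk (bs i) (φ (bs j)) - sg (parity j) (parity i) • brk (bs j) (φ (bs i))

lemma IsEvenSelfDer.add {φ ψ : Tsns →ₗ[ℂ] Tsns} (hφ : IsEvenSelfDer φ)
    (hψ : IsEvenSelfDer ψ) : IsEvenSelfDer (φ + ψ) := by
  intro i j
  simp only [LinearMap.add_apply, map_add, hφ i j, hψ i j, smul_add]
  abel

lemma IsEvenSelfDer.smul {φ : Tsns →ₗ[ℂ] Tsns} (hφ : IsEvenSelfDer φ) (c : ℂ) :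
    IsEvenSelfDer (c • φ) := by
  intro i j
  simp only [LinearMap.smul_apply, map_smul, hφ i j, smul_sub, smul_comm c]

def diagOp (w : TIdx → ℂ) : Tsns →ₗ[ℂ] Tsns :=
  Finsupp.lsum ℂ fun i => LinearMap.toSpanSingleton ℂ Tsns (w i • bs i)

@[simp] lemma diagOp_bs (w : TIdx → ℂ) (i : TIdx) : diagOp w (bs i) = w i • bs i := by
  simp [diagOp, bs, LinearMap.toSpanSingleton_apply]

lemma isEvenSelfDer_diagOp {w : TIdx → ℂ}
    (hw : ∀ i j, diagOp w (brIdx i j) = (w i + w j) • brIdx i j) :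
    IsEvenSelfDer (diagOp w) := by
  intro i j
  have hsg : sg (parity j) (parity i) * sg (parity i) (parity j) = 1 := by
    rw [sg_comm, sg_mul_self]
  simp only [brk_bs, diagOp_bs, map_smul, hw, brIdx_swap i j, smul_neg, smul_smul,
    mul_comm (w i), ← mul_assoc, hsg]
  module

def yWeight : TIdx → ℂ
  | .Y _ => 1
  | .M _ => 2
  | _ => 0

lemma diagOp_yWeight_brIdx (i j : TIdx) :
    diagOp yWeight (brIdx i j) = (yWeight i + yWeight j) • brIdx i j := by
  obtain (n|n|n|n) := i <;> obtain (m|m|m|m) := j <;>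
  simp only [brIdx] <;> (try split_ifs) <;> simp [yWeight, smul_smul] <;> ring_nf

def lgToMB : TIdx → Tsns
  | .L n => (n : ℂ) • bs (.M (2 * n))
  | .G k => ((k : ℂ) + 1 / 2) • bs (.M (2 * k + 1))
  | _ => 0

def lgToM : Tsns →ₗ[ℂ] Tsns :=
  Finsupp.lsum ℂ fun i => LinearMap.toSpanSingleton ℂ Tsns (lgToMB i)

@[simp] lemma lgToM_bs (i : TIdx) : lgToM (bs i) = lgToMB i := by
  simp [lgToM, bs, LinearMap.toSpanSingleton_apply]

lemma isEvenSelfDer_lgToM : IsEvenSelfDer lgToM := by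
  intro i j
  obtain (n|n|n|n) := i <;> obtain (m|m|m|m) := j <;>
  simp only [brk_bs, lgToM_bs, brIdx] <;> (try split_ifs) <;>
  simp [lgToMB, brIdx, parity, CharTwo.two_eq_zero] <;> ring_nf <;> module

def natDer (a b : ℂ) : Tsns →ₗ[ℂ] Tsns := a • lgToM + b • diagOp yWeight

lemma isEvenSelfDer_natDer (a b : ℂ) : IsEvenSelfDer (natDer a b) :=
  (isEvenSelfDer_lgToM.smul a).add ((isEvenSelfDer_diagOp diagOp_yWeight_brIdx).smul b)

@[simp] lemma dnat_bs (a a' b b' : ℂ) (i : TIdx) :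
    dnat a a' b b' (bs i) = dnatB a a' b b' i := by
  simp [dnat, bs, LinearMap.toSpanSingleton_apply]

lemma dnat_eq (a a' b b' : ℂ) :
    dnat a a' b b' =
      (tp (bs (.M 0))).comp (natDer a b) + (tp.flip (bs (.M 0))).comp (natDer a' b') := by
  refine Finsupp.lhom_ext' fun i => LinearMap.ext_ring ?_
  rw [LinearMap.comp_apply, LinearMap.comp_apply, Finsupp.lsingle_apply, ← bs]
  cases i <;>
    simp [dnatB, natDer, lgToMB, yWeight, smul_smul, mul_comm _ (2 : ℂ), -Finsupp.single_mul]

lemma isDer2_of_isEvenSelfDer {φ ψ : Tsns →ₗ[ℂ] Tsns} (hφ : IsEvenSelfDer φ)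
    (hψ : IsEvenSelfDer ψ) :
    IsDer2 ((tp (bs (.M 0))).comp φ + (tp.flip (bs (.M 0))).comp ψ) := by
  intro i j
  simp only [LinearMap.add_apply, LinearMap.comp_apply, LinearMap.flip_apply, map_add, smul_add,
    star2_tp_M_zero_left, star2_tp_M_zero_right, hφ i j, hψ i j, map_sub, map_smul,
    sg_zero_left, one_smul, zero_add]
  abel

end

/-- for any `α, α†, β, β† ∈ ℂ`, the map `d^♮` is a derivation from
`tsns` to the `tsns`-module `tsns ⊗ tsns` (adjoint diagonal action). -/
theorem dnat_is_derivation (a a' b b' : ℂ) : IsDer2 (dnat a a' b b') := by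
  rw [dnat_eq]
  exact isDer2_of_isEvenSelfDer (isEvenSelfDer_natDer a b) (isEvenSelfDer_natDer a' b')
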